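/- Let n ≥ 2 and let u_0,…,u_n denote the standard basis of ℝ^{n+1}. Suppose v ∈ ℝ^{n+1} satisfies: B_5(v, u_{i+1} − u_i) ≤ 0 for every 1 ≤ i ≤ n−1, B_5(v, −u_n) ≤ 0, B_5(v, u_2 − u_1) = 0, B_5(v, 2u_0 + 5u_1) = 0, and B_5(v, 3u_0 + 5u_1 + 5u_2) ≤ 0. Then v = 0. -/

import Mathlib

/-!
Pairing `v` with `u_j` reads off `v_j` for `j ≥ 1` and `-5 v_0` for `j = 0`. The hypotheses then
say `v_1 ≥ v_2 ≥ ⋯ ≥ v_n ≥ 0`, `v_2 = v_1` and `v_1 = 2 v_0`, so the last one becomes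
`(5/2) v_1 ≤ 0`. Hence `v_1 = ⋯ = v_n = 0`, and `v_0 = v_1 / 2 = 0`.
-/

/-- The bilinear form `B_5(x,y) = -5·x_0·y_0 + x_1·y_1 + … + x_n·y_n` on `ℝ^{n+1}`. -/
def BformR {n : ℕ} (x y : Fin (n + 1) → ℝ) : ℝ :=
  -5 * x 0 * y 0 + ∑ i ∈ Finset.univ.filter (fun i : Fin (n + 1) => i ≠ 0), x i * y i

/-- The standard basis of `ℝ^{n+1}`. -/
def stdBasis {n : ℕ} (i : Fin (n + 1)) : Fin (n + 1) → ℝ :=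
  fun j => if j = i then 1 else 0

theorem Fin.antitoneOn_Ici_of_succ_le {α : Type*} [Preorder α] {n : ℕ} {f : Fin (n + 1) → α}
    {k : Fin (n + 1)} (hf : ∀ i : Fin n, k ≤ i.castSucc → f i.succ ≤ f i.castSucc) :
    AntitoneOn f (Set.Ici k) := by
  refine antitoneOn_of_succ_le Set.ordConnected_Ici fun a ha_max ha _ => ?_
  obtain ⟨i, rfl⟩ := Fin.eq_castSucc_of_ne_last (by simpa [Fin.top_eq_last] using ha_max)
  rw [Fin.orderSucc_castSucc]
  exact hf i ha

theorem Fin.eq_of_antitoneOn_Ici {α : Type*} [PartialOrder α] {n : ℕ} {f : Fin (n + 1) → α}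
    {k : Fin (n + 1)} {a : α} (hf : AntitoneOn f (Set.Ici k)) (hk : f k ≤ a)
    (hlast : a ≤ f (Fin.last n)) {j : Fin (n + 1)} (hj : k ≤ j) : f j = a :=
  le_antisymm ((hf Set.self_mem_Ici hj hj).trans hk)
    (hlast.trans (hf hj (hj.trans (Fin.le_last j)) (Fin.le_last j)))

section BformR

variable {n : ℕ} (v : Fin (n + 1) → ℝ)

theorem BformR_add_right (x y : Fin (n + 1) → ℝ) :
    BformR v (x + y) = BformR v x + BformR v y := by
  simp only [BformR, Pi.add_apply, mul_add, Finset.sum_add_distrib]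
  ring

theorem BformR_neg_right (x : Fin (n + 1) → ℝ) : BformR v (-x) = -BformR v x := by
  simp only [BformR, Pi.neg_apply, mul_neg, Finset.sum_neg_distrib]
  ring

theorem BformR_sub_right (x y : Fin (n + 1) → ℝ) :
    BformR v (x - y) = BformR v x - BformR v y := by
  rw [sub_eq_add_neg, BformR_add_right, BformR_neg_right, sub_eq_add_neg]

theorem BformR_nsmul_right (k : ℕ) (x : Fin (n + 1) → ℝ) :
    BformR v (k • x) = k * BformR v x := by
  simp only [BformR, Pi.smul_apply, nsmul_eq_mul, mul_add, Finset.mul_sum]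
  ring_nf

theorem BformR_stdBasis_zero : BformR v (stdBasis 0) = -5 * v 0 := by
  simp [BformR, stdBasis]

theorem BformR_stdBasis_of_ne_zero {j : Fin (n + 1)} (hj : j ≠ 0) :
    BformR v (stdBasis j) = v j := by
  simp [BformR, stdBasis, hj, hj.symm]

end BformR

theorem stmt8 (n : ℕ) (hn : 2 ≤ n) (v : Fin (n + 1) → ℝ)
    (h1 : ∀ i : ℕ, (h1i : 1 ≤ i) → (hin : i ≤ n - 1) →
      BformR v (stdBasis ⟨i + 1, by omega⟩ - stdBasis ⟨i, by omega⟩) ≤ 0)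
    (h2 : BformR v (-stdBasis (Fin.last n)) ≤ 0)
    (h3 : BformR v (stdBasis ⟨2, by omega⟩ - stdBasis ⟨1, by omega⟩) = 0)
    (h4 : BformR v (2 • stdBasis (0 : Fin (n + 1)) + 5 • stdBasis ⟨1, by omega⟩) = 0)
    (h5 : BformR v (3 • stdBasis (0 : Fin (n + 1)) + 5 • stdBasis ⟨1, by omega⟩ +
      5 • stdBasis ⟨2, by omega⟩) ≤ 0) :
    v = 0 := by
  have ne_zero {i : ℕ} (hi : i < n + 1) (h0 : 1 ≤ i) : (⟨i, hi⟩ : Fin (n + 1)) ≠ 0 :=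
    Fin.ne_of_val_ne (by dsimp; omega)
  have one_ne_zero : (⟨1, by omega⟩ : Fin (n + 1)) ≠ 0 := ne_zero _ le_rfl
  have two_ne_zero : (⟨2, by omega⟩ : Fin (n + 1)) ≠ 0 := ne_zero _ one_le_two
  have last_ne_zero : Fin.last n ≠ 0 := ne_zero (i := n) _ (by omega)
  simp only [BformR_add_right, BformR_sub_right, BformR_neg_right, BformR_nsmul_right,
    BformR_stdBasis_zero, BformR_stdBasis_of_ne_zero v one_ne_zero,
    BformR_stdBasis_of_ne_zero v two_ne_zero,
    BformR_stdBasis_of_ne_zero v last_ne_zero, Nat.cast_ofNat] at h2 h3 h4 h5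
  have anti : AntitoneOn v (Set.Ici ⟨1, by omega⟩) :=
    Fin.antitoneOn_Ici_of_succ_le fun i (hi : 1 ≤ (i : ℕ)) => by
      have := h1 i hi (by omega)
      rwa [BformR_sub_right, BformR_stdBasis_of_ne_zero v (ne_zero _ (by omega)),
        BformR_stdBasis_of_ne_zero v (ne_zero _ hi), sub_nonpos] at this
  have hv1 : v ⟨1, by omega⟩ ≤ 0 := by linarith
  have hpos {j : Fin (n + 1)} (hj : ⟨1, by omega⟩ ≤ j) : v j = 0 :=
    Fin.eq_of_antitoneOn_Ici anti hv1 (by linarith) hj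
  have hv0 : v 0 = 0 := by linarith [hpos le_rfl]
  ext j
  rcases eq_or_ne j 0 with rfl | hj
  · exact hv0
  · exact hpos (Fin.pos_of_ne_zero hj)
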